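/- Let G be a vertex-weighted undirected graph having a domino tree decomposition (elongation at most 1) of width k, and let t ≥ 2 be an integer. Set a = ⌈k/2⌉. If a ≤ 1, then G has a (t, (4t-3)(k+1))-trimming; if a ≥ 2, then G has a (t, g)-trimming with g = ((k+1)(a^{2t-2}(a+1) - 2))/(a-1). -/

import Mathlib

open scoped Classical

/-- A tree decomposition of a graph `G`. -/
structure TreeDecomp (V : Type) (G : SimpleGraph V) where
  X : Type
  T : SimpleGraph X
  tree : T.IsTree
  B : X → Finset V
  cover : ∀ v : V, ∃ x : X, v ∈ B x
  edges : ∀ u v : V, G.Adj u v → ∃ x : X, u ∈ B x ∧ v ∈ B x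
  subtree : ∀ (v : V) (x y z : X) (p : T.Walk x z), p.IsPath → y ∈ p.support →
    v ∈ B x → v ∈ B z → v ∈ B y

/-- A `(t,g)`-trimming of a vertex-weighted graph. -/
def IsTrimming {V : Type} [Fintype V] (G : SimpleGraph V) (w : V → ℝ)
    (t g : ℝ) (U : Finset V) : Prop :=
  (∑ v ∈ U, w v) ≤ (∑ v, w v) / t ∧
    ∀ (u v : V) (p : G.Walk u v), p.IsPath → (p.length : ℝ) > g →
      ∃ x ∈ p.support, x ∈ U

/-!
Root the decomposition tree at `r` and let `f v` (`minDepth r v`) be the least depth of a bag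
containing `v`. By the domino property every bag containing `v` has depth `f v` or `f v + 1`, so `f`
changes by at most one along each edge of `G`, and the lightest residue class of `f` modulo `t` is
the trimming set. Along a path avoiding it, `f` stays within `t - 1` consecutive values, so bags
covering consecutive edges of the path form a walk in the tree inside a band of `t` levels; each
visit of this walk to a bag uses two path vertices of that bag, so no bag is visited more than `a`
times. Every bag of such a walk except one ancestor of its start per level is entered from its
parent, hence level `j` of the band contains at most `1 + a + ⋯ + a ^ j` of its bags; when `a ≤ 1`
the walk is a path in the tree and has at most `2t - 1` bags. As each bag holds at most `k + 1`
vertices, long paths cannot avoid the trimming set.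
-/

open Finset

lemma Nat.exists_mod_eq_of_lt {i t : ℕ} (hi : i < t) (m : ℕ) :
    ∃ c, m ≤ c ∧ c < m + t ∧ c % t = i := by
  refine ⟨i + t * ((m + t - 1 - i) / t), ?_, ?_, by
    rw [Nat.add_mul_mod_self_left, Nat.mod_eq_of_lt hi]⟩
  · have := Nat.lt_mul_div_succ (m + t - 1 - i) (show 0 < t by omega)
    rw [Nat.mul_add, mul_one] at this
    omega
  · have := Nat.mul_div_le (m + t - 1 - i) t
    omega

lemma exists_mod_eq_sum_le {V : Type*} [Fintype V] (w : V → ℝ) (f : V → ℕ) {t : ℕ}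
    (ht : 0 < t) : ∃ i < t, ∑ v ∈ {v | f v % t = i}, w v ≤ (∑ v, w v) / t := by
  obtain ⟨i, hi, h⟩ := exists_sum_fiber_le_of_maps_to_of_sum_le_nsmul
    (s := (univ : Finset V)) (t := range t) (f := (f · % t)) (b := (∑ v, w v) / t)
    (fun v _ => mem_range.mpr (Nat.mod_lt _ ht)) (nonempty_range_iff.mpr ht.ne')
    (by rw [card_range, nsmul_eq_mul, mul_div_cancel₀ _ (Nat.cast_ne_zero.mpr ht.ne')])
  exact ⟨i, mem_range.mp hi, h⟩

lemma sum_range_geom_sum_le {a t : ℕ} (ha : 2 ≤ a) (ht : 2 ≤ t) :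
    ((∑ j ∈ range t, ∑ i ∈ range (j + 1), a ^ i : ℕ) : ℝ) ≤
      ((a : ℝ) ^ (2 * t - 2) * ((a : ℝ) + 1) - 2) / ((a : ℝ) - 1) := by
  have hgeom : ∀ n, (a - 1) * ∑ i ∈ range n, a ^ i + 1 = a ^ n := fun n => by
    obtain ⟨b, rfl⟩ : ∃ b, a = b + 1 := ⟨a - 1, by omega⟩
    rw [Nat.add_sub_cancel, mul_comm, geom_sum_mul_add]
  have key : (a - 1) * ∑ j ∈ range t, ∑ i ∈ range (j + 1), a ^ i + 2 ≤
      a ^ (2 * t - 2) * (a + 1) := calc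
    _ ≤ (a - 1) * ∑ j ∈ range t, ∑ i ∈ range (j + 1), a ^ i + t := by omega
    _ = ∑ j ∈ range t, ((a - 1) * ∑ i ∈ range (j + 1), a ^ i + 1) := by
        rw [sum_add_distrib, ← mul_sum, sum_const, card_range, smul_eq_mul, mul_one]
    _ = ∑ j ∈ range t, a ^ (j + 1) := sum_congr rfl fun j _ => hgeom (j + 1)
    _ = a * ∑ j ∈ range t, a ^ j := by rw [mul_sum]; simp [pow_succ, mul_comm]
    _ ≤ a * a ^ t := by gcongr; exact (Nat.geomSum_lt ha fun j hj => mem_range.mp hj).le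
    _ = a ^ (t + 1) := (pow_succ' a t).symm
    _ ≤ a ^ (2 * t - 2 + 1) := Nat.pow_le_pow_right (by omega) (by omega)
    _ ≤ a ^ (2 * t - 2) * (a + 1) := by rw [pow_succ]; gcongr; omega
  have ha' : (1 : ℝ) < a := by exact_mod_cast ha
  rw [le_div_iff₀ (by linarith)]
  have := (Nat.cast_le (α := ℝ)).mpr key
  push_cast [Nat.cast_sub (by omega : 1 ≤ a)] at this ⊢
  linarith

lemma card_filter_mem_le_of_subset {V : Type*} (B : Finset V) {l l' : List V} (h : l ⊆ l') :
    #{w ∈ B | w ∈ l} ≤ #{w ∈ B | w ∈ l'} :=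
  card_le_card (monotone_filter_right _ fun _ _ hw => h hw)

lemma two_add_card_filter_mem_le {V : Type*} {B : Finset V} {u u' : V} {l : List V}
    (hu : u ∈ B) (hu' : u' ∈ B) (hl : (u :: u' :: l).Nodup) :
    2 + #{w ∈ B | w ∈ l} ≤ #{w ∈ B | w ∈ u :: u' :: l} := by
  simp only [List.nodup_cons, List.mem_cons, not_or] at hl
  have hsub : insert u (insert u' {w ∈ B | w ∈ l}) ⊆ {w ∈ B | w ∈ u :: u' :: l} := by
    intro w hw
    simp only [mem_insert, mem_filter] at hw
    rcases hw with rfl | rfl | ⟨hw, hwl⟩ <;> simp [*]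
  have hcard := card_le_card hsub
  rw [card_insert_of_notMem (by simp [hl.1.1, hl.1.2]),
    card_insert_of_notMem (by simp [hl.2.1])] at hcard
  omega

namespace SimpleGraph

variable {V X : Type*} {G : SimpleGraph V} {T : SimpleGraph X} {B : X → Finset V}

lemma Walk.exists_mem_support_eq_of_le_of_le {f : V → ℕ}
    (hf : ∀ u v, G.Adj u v → f u ≤ f v + 1) {u v : V} (W : G.Walk u v) {x y : V}
    (hx : x ∈ W.support) (hy : y ∈ W.support) {c : ℕ} (hxc : f x ≤ c) (hcy : c ≤ f y) :
    ∃ z ∈ W.support, f z = c := by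
  induction W generalizing x y with
  | nil =>
    rw [Walk.mem_support_nil_iff] at hx hy
    subst hx hy
    exact ⟨_, Walk.start_mem_support _, by omega⟩
  | @cons u u' v hadj W ih =>
    have h1 := hf u u' hadj
    have h2 := hf u' u hadj.symm
    have hsub : ∀ {z}, z ∈ W.support → z ∈ (cons hadj W).support := List.mem_cons_of_mem _
    by_cases hc : f u = c
    · exact ⟨u, Walk.start_mem_support _, hc⟩
    rcases List.mem_cons.mp hx with rfl | hxW <;> rcases List.mem_cons.mp hy with rfl | hyW
    · omega
    · obtain ⟨z, hz, hzc⟩ := ih W.start_mem_support hyW (by omega) hcy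
      exact ⟨z, hsub hz, hzc⟩
    · obtain ⟨z, hz, hzc⟩ := ih hxW W.start_mem_support hxc (by omega)
      exact ⟨z, hsub hz, hzc⟩
    · obtain ⟨z, hz, hzc⟩ := ih hxW hyW hxc hcy
      exact ⟨z, hsub hz, hzc⟩

lemma Walk.exists_window_of_forall_mod_ne {f : V → ℕ} (hf : ∀ u v, G.Adj u v → f u ≤ f v + 1)
    {u v : V} (W : G.Walk u v) {i t : ℕ} (hi : i < t)
    (havoid : ∀ z ∈ W.support, f z % t ≠ i) :
    ∃ m, ∀ z ∈ W.support, m ≤ f z ∧ f z + 2 ≤ m + t := by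
  obtain ⟨z₀, hz₀, hmin⟩ := W.support.toFinset.exists_min_image f
    ⟨u, List.mem_toFinset.mpr W.start_mem_support⟩
  rw [List.mem_toFinset] at hz₀
  refine ⟨f z₀, fun z hz => ⟨hmin z (List.mem_toFinset.mpr hz), ?_⟩⟩
  by_contra! hfar
  obtain ⟨c, hc₀, hct, hci⟩ := Nat.exists_mod_eq_of_lt hi (f z₀)
  obtain ⟨z', hz', rfl⟩ := W.exists_mem_support_eq_of_le_of_le hf hz₀ hz hc₀ (by omega)
  exact havoid z' hz' hci

/-- Each visit of `Q` to a bag `z` accounts for two vertices of `p` in `B z`; only a visit to the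
first bag `x` may use the first vertex `u` of `p`. -/
structure Walk.IsBagWalk (B : X → Finset V) {u v : V} (p : G.Walk u v) {x y : X}
    (Q : T.Walk x y) : Prop where
  start_mem : u ∈ B x
  cover : ∀ w ∈ p.support, ∃ z ∈ Q.support, w ∈ B z
  two_mul_count_le : ∀ z, 2 * Q.support.count z ≤
    #{w ∈ B z | w ∈ if z = x then p.support else p.support.tail}

lemma Walk.isBagWalk_cons_nil {u u' : V} (hadj : G.Adj u u') {x : X} (hu : u ∈ B x)
    (hu' : u' ∈ B x) : (cons hadj nil).IsBagWalk B (nil : T.Walk x x) where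
  start_mem := hu
  cover w hw := ⟨x, by simp, by rcases List.mem_pair.mp hw with rfl | rfl <;> assumption⟩
  two_mul_count_le z := by
    by_cases hz : z = x
    · subst hz
      simpa using two_add_card_filter_mem_le (l := []) hu hu' (by simp [hadj.ne])
    · simp [List.count_eq_zero.mpr (by simpa [eq_comm] using hz : z ∉ [x])]

lemma Walk.IsBagWalk.cons_of_mem {u u' v : V} {p : G.Walk u' v} {x y : X} {Q : T.Walk x y}
    (hQ : p.IsBagWalk B Q) (hadj : G.Adj u u') (hu : u ∈ B x) :
    (cons hadj p).IsBagWalk B Q where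
  start_mem := hu
  cover w hw := by
    rcases List.mem_cons.mp hw with rfl | hw
    · exact ⟨x, Q.start_mem_support, hu⟩
    · exact hQ.cover w hw
  two_mul_count_le z := by
    refine (hQ.two_mul_count_le z).trans (card_filter_mem_le_of_subset _ ?_)
    split_ifs
    exacts [List.subset_cons_self _ _, List.tail_subset _]

lemma Walk.IsBagWalk.cons_of_adj {u u' v : V} {p : G.Walk u' v} {x' y : X} {Q : T.Walk x' y}
    (hQ : p.IsBagWalk B Q) (hadj : G.Adj u u') (hp : (cons hadj p).IsPath) {x : X}
    (hxx' : T.Adj x x') (hu : u ∈ B x) (hu' : u' ∈ B x) :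
    (cons hadj p).IsBagWalk B (cons hxx' Q) where
  start_mem := hu
  cover w hw := by
    rcases List.mem_cons.mp hw with rfl | hw
    · exact ⟨x, Walk.start_mem_support _, hu⟩
    · obtain ⟨z, hz, hwz⟩ := hQ.cover w hw
      exact ⟨z, List.mem_cons_of_mem _ hz, hwz⟩
  two_mul_count_le z := by
    have hcount := hQ.two_mul_count_le z
    by_cases hz : z = x
    · subst hz
      have hnodup := hp.support_nodup
      rw [Walk.support_cons, ← p.cons_tail_support] at hnodup
      have := two_add_card_filter_mem_le hu hu' hnodup
      rw [if_neg hxx'.ne] at hcount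
      simp only [if_true, Walk.support_cons, List.count_cons_self, p.cons_tail_support] at this ⊢
      omega
    · have := hcount.trans (card_filter_mem_le_of_subset (B z) (l' := p.support) (by
        split_ifs
        exacts [List.Subset.refl _, List.tail_subset _]))
      simpa [hz, Walk.support_cons, List.count_cons, Ne.symm hz] using this

lemma Walk.IsPath.exists_isBagWalk (hB : ∀ u v, G.Adj u v → ∃ x, u ∈ B x ∧ v ∈ B x)
    (hdom : ∀ x y, (B x ∩ B y).Nonempty → x = y ∨ T.Adj x y)
    {u v : V} {p : G.Walk u v} (hp : p.IsPath) (hnil : ¬ p.Nil) :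
    ∃ (x y : X) (Q : T.Walk x y), p.IsBagWalk B Q := by
  induction p with
  | nil => exact absurd Walk.Nil.nil hnil
  | @cons u u' v hadj p ih =>
    obtain ⟨x, hux, hu'x⟩ := hB _ _ hadj
    cases p with
    | nil => exact ⟨x, x, .nil, isBagWalk_cons_nil hadj hux hu'x⟩
    | cons hadj' p =>
      obtain ⟨x', y, Q, hQ⟩ := ih hp.of_cons Walk.not_nil_cons
      rcases hdom x x' ⟨u', mem_inter.mpr ⟨hu'x, hQ.start_mem⟩⟩ with rfl | hxx'
      · exact ⟨x, y, Q, hQ.cons_of_mem hadj hux⟩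
      · exact ⟨x, y, cons hxx' Q, hQ.cons_of_adj hadj hp hxx' hux hu'x⟩

lemma Walk.IsBagWalk.two_mul_count_le_card {u v : V} {p : G.Walk u v} {x y : X}
    {Q : T.Walk x y} (hQ : p.IsBagWalk B Q) (z : X) :
    2 * Q.support.count z ≤ #{w ∈ B z | w ∈ p.support} := by
  refine (hQ.two_mul_count_le z).trans ?_
  split_ifs
  · exact le_rfl
  · exact card_filter_mem_le_of_subset _ (List.tail_subset _)

/-- In a tree: `z` lies on the path from the root `r` to `x`. -/
def IsAncestor (T : SimpleGraph X) (r z x : X) : Prop :=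
  T.dist r z + T.dist z x = T.dist r x

lemma isAncestor_self (r x : X) : T.IsAncestor r x x := by
  simp [IsAncestor]

lemma IsTree.eq_of_length_eq_dist (hT : T.IsTree) {u v : X} {p q : T.Walk u v}
    (hp : p.length = T.dist u v) (hq : q.length = T.dist u v) : p = q :=
  (hT.existsUnique_path u v).unique (p.isPath_of_length_eq_dist hp)
    (q.isPath_of_length_eq_dist hq)

lemma IsTree.length_eq_dist_of_isPath (hT : T.IsTree) {u v : X} {p : T.Walk u v}
    (hp : p.IsPath) : p.length = T.dist u v := by
  obtain ⟨q, hq, hlen⟩ := hT.connected.exists_path_of_dist u v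
  rw [(hT.existsUnique_path u v).unique hp hq, hlen]

lemma IsTree.eq_of_adj_of_dist_eq (hT : T.IsTree) (r : X) {x y y' : X} (hy : T.Adj y x)
    (hy' : T.Adj y' x) (hx : T.dist r x = T.dist r y + 1) (hx' : T.dist r x = T.dist r y' + 1) :
    y = y' := by
  obtain ⟨p, hp⟩ := hT.connected.exists_walk_length_eq_dist r y
  obtain ⟨p', hp'⟩ := hT.connected.exists_walk_length_eq_dist r y'
  have h := hT.eq_of_length_eq_dist (p := p.concat hy) (q := p'.concat hy')
    (by simp [hp, hx]) (by simp [hp', hx'])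
  simpa using congrArg Walk.penultimate h

lemma IsAncestor.of_adj (hT : T.Connected) {r z x x' : X} (h : T.IsAncestor r z x')
    (hadj : T.Adj x x') (hx : T.dist r x = T.dist r x' + 1) : T.IsAncestor r z x := by
  have h1 : T.dist z x ≤ T.dist z x' + T.dist x' x := hT.dist_triangle
  have h2 : T.dist r x ≤ T.dist r z + T.dist z x := hT.dist_triangle
  have h3 : T.dist x' x = 1 := dist_eq_one_iff_adj.mpr hadj.symm
  unfold IsAncestor at h ⊢
  omega

lemma IsAncestor.eq_or_of_adj (hT : T.IsTree) {r z x x' : X} (h : T.IsAncestor r z x')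
    (hadj : T.Adj x x') (hx' : T.dist r x' = T.dist r x + 1) :
    z = x' ∨ T.IsAncestor r z x := by
  refine or_iff_not_imp_left.mpr fun hne => ?_
  obtain ⟨q, hq⟩ := hT.connected.exists_walk_length_eq_dist x' z
  have hnil : ¬ q.Nil := fun hn => hne hn.eq.symm
  -- the neighbour of `x'` on a shortest path to its ancestor `z` is a parent of `x'`
  have hwz : T.dist z q.snd + 1 ≤ T.dist z x' := by
    have := dist_le q.tail
    have := q.length_tail_add_one hnil
    rw [dist_comm (u := z), dist_comm (u := z)]
    omega
  have hrw : T.dist r q.snd ≤ T.dist r z + T.dist z q.snd := hT.connected.dist_triangle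
  have hw := hT.dist_eq_dist_add_one_of_adj r (q.adj_snd hnil)
  unfold IsAncestor at h ⊢
  obtain rfl : q.snd = x :=
    hT.eq_of_adj_of_dist_eq r (q.adj_snd hnil).symm hadj (by omega) hx'
  omega

lemma IsAncestor.eq_of_dist_eq (hT : T.IsTree) {r z z' x : X} (h : T.IsAncestor r z x)
    (h' : T.IsAncestor r z' x) (hd : T.dist r z = T.dist r z') : z = z' := by
  obtain ⟨p, hp⟩ := hT.connected.exists_walk_length_eq_dist r z
  obtain ⟨q, hq⟩ := hT.connected.exists_walk_length_eq_dist z x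
  obtain ⟨p', hp'⟩ := hT.connected.exists_walk_length_eq_dist r z'
  obtain ⟨q', hq'⟩ := hT.connected.exists_walk_length_eq_dist z' x
  have heq := hT.eq_of_length_eq_dist (p := p.append q) (q := p'.append q')
    (by rw [Walk.length_append, hp, hq]; exact h) (by rw [Walk.length_append, hp', hq']; exact h')
  simpa [Walk.getVert_append, hp, hp', hd] using congrArg (Walk.getVert · (T.dist r z)) heq

lemma Walk.card_filter_darts_fst_eq_le {u v : V} (W : G.Walk u v) (y : V) :
    #{e ∈ W.darts.toFinset | e.fst = y} ≤ W.support.count y := by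
  calc #{e ∈ W.darts.toFinset | e.fst = y}
      ≤ (W.darts.filter (·.fst = y)).toFinset.card := card_le_card fun e => by simp
    _ ≤ (W.darts.filter (·.fst = y)).length := List.toFinset_card_le _
    _ = (W.darts.map (·.fst)).count y := by
        simp only [List.count, List.countP_eq_length_filter, List.filter_map, List.length_map]
        congr 2
    _ = W.support.dropLast.count y := by rw [Walk.map_fst_darts]
    _ ≤ W.support.count y := (List.dropLast_sublist _).count_le _

lemma Walk.isAncestor_or_exists_dart (hT : T.IsTree) (r : X) {x y z : X} (W : T.Walk x y)
    (hz : z ∈ W.support) :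
    T.IsAncestor r z x ∨ ∃ e ∈ W.darts, e.snd = z ∧ T.dist r e.fst + 1 = T.dist r z := by
  induction W with
  | nil =>
    rw [Walk.mem_support_nil_iff] at hz
    exact .inl (hz ▸ isAncestor_self r _)
  | @cons x x' y hadj W ih =>
    rcases List.mem_cons.mp hz with rfl | hz
    · exact .inl (isAncestor_self r _)
    rcases ih hz with hanc | ⟨e, he, hez, hed⟩
    · rcases hT.dist_eq_dist_add_one_of_adj r hadj with hd | hd
      · exact .inl (hanc.of_adj hT.connected hadj hd)
      · rcases hanc.eq_or_of_adj hT hadj hd with rfl | hanc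
        · exact .inr ⟨⟨(x, z), hadj⟩, by simp, rfl, hd.symm⟩
        · exact .inl hanc
    · exact .inr ⟨e, by simp [he], hez, hed⟩

lemma Walk.isAncestor_of_forall_dist_le (hT : T.IsTree) (r : X) {x y z : X} (W : T.Walk x y)
    (hz : z ∈ W.support) (hmin : ∀ z' ∈ W.support, T.dist r z ≤ T.dist r z') :
    T.IsAncestor r z x := by
  refine (W.isAncestor_or_exists_dart hT r hz).resolve_right ?_
  rintro ⟨e, he, rfl, hd⟩
  have := hmin e.fst (W.dart_fst_mem_support_of_mem_darts he)
  omega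

lemma Walk.card_filter_dist_succ_le (hT : T.IsTree) (r : X) {x y : X} (W : T.Walk x y) {a : ℕ}
    (hcount : ∀ z, W.support.count z ≤ a) (j : ℕ) :
    #{z ∈ W.support.toFinset | T.dist r z = j + 1} ≤
      1 + a * #{z ∈ W.support.toFinset | T.dist r z = j} := by
  set S := {z ∈ W.support.toFinset | T.dist r z = j}
  set S' := {z ∈ W.support.toFinset | T.dist r z = j + 1}
  have hanc : #{z ∈ S' | T.IsAncestor r z x} ≤ 1 := by
    refine card_le_one.mpr fun z hz z' hz' => ?_
    simp only [S', mem_filter] at hz hz'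
    exact hz.2.eq_of_dist_eq hT hz'.2 (hz.1.2.trans hz'.1.2.symm)
  have hdarts : #{z ∈ S' | ¬ T.IsAncestor r z x} ≤ #{e ∈ W.darts.toFinset | e.fst ∈ S} := by
    refine card_le_card_of_surjOn (·.snd) fun z hz => ?_
    simp only [S', coe_filter, mem_filter, List.mem_toFinset, Set.mem_ofPred_eq] at hz
    obtain ⟨e, he, rfl, hd⟩ := (W.isAncestor_or_exists_dart hT r hz.1.1).resolve_left hz.2
    refine ⟨e, ?_, rfl⟩
    simp only [S, coe_filter, Set.mem_ofPred_eq, List.mem_toFinset, mem_filter]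
    exact ⟨he, W.dart_fst_mem_support_of_mem_darts he, by omega⟩
  have hfiber : #{e ∈ W.darts.toFinset | e.fst ∈ S} ≤ a * #S := by
    refine card_le_mul_card_image_of_maps_to (fun e he => (mem_filter.mp he).2) a fun y _ => ?_
    calc #{e ∈ {e ∈ W.darts.toFinset | e.fst ∈ S} | e.fst = y}
        ≤ #{e ∈ W.darts.toFinset | e.fst = y} :=
          card_le_card (filter_subset_filter _ (filter_subset _ _))
      _ ≤ a := (W.card_filter_darts_fst_eq_le y).trans (hcount y)
  rw [← card_filter_add_card_filter_not (fun z => T.IsAncestor r z x)]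
  exact add_le_add hanc (hdarts.trans hfiber)

lemma Walk.card_filter_dist_add_le (hT : T.IsTree) (r : X) {x y : X} (W : T.Walk x y)
    {a ℓ : ℕ} (hcount : ∀ z, W.support.count z ≤ a)
    (hband : ∀ z ∈ W.support, ℓ ≤ T.dist r z) (j : ℕ) :
    #{z ∈ W.support.toFinset | T.dist r z = ℓ + j} ≤ ∑ i ∈ range (j + 1), a ^ i := by
  induction j with
  | zero =>
    refine card_le_one.mpr fun z hz z' hz' => ?_
    simp only [mem_filter, List.mem_toFinset, add_zero] at hz hz'
    have hanc : ∀ z ∈ W.support, T.dist r z = ℓ → T.IsAncestor r z x := fun z hz hd =>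
      W.isAncestor_of_forall_dist_le hT r hz fun z' hz' => hd ▸ hband z' hz'
    exact (hanc z hz.1 hz.2).eq_of_dist_eq hT (hanc z' hz'.1 hz'.2) (hz.2.trans hz'.2.symm)
  | succ j ih =>
    calc #{z ∈ W.support.toFinset | T.dist r z = ℓ + (j + 1)}
        ≤ 1 + a * #{z ∈ W.support.toFinset | T.dist r z = ℓ + j} :=
          W.card_filter_dist_succ_le hT r hcount (ℓ + j)
      _ ≤ 1 + a * ∑ i ∈ range (j + 1), a ^ i := by gcongr
      _ = ∑ i ∈ range (j + 2), a ^ i := by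
          rw [sum_range_succ' _ (j + 1), mul_sum, add_comm]
          simp [pow_succ, mul_comm]

lemma Walk.card_support_toFinset_le (hT : T.IsTree) (r : X) {x y : X} (W : T.Walk x y)
    {a ℓ h : ℕ} (hcount : ∀ z, W.support.count z ≤ a)
    (hband : ∀ z ∈ W.support, ℓ ≤ T.dist r z ∧ T.dist r z < ℓ + h) :
    #W.support.toFinset ≤ ∑ j ∈ range h, ∑ i ∈ range (j + 1), a ^ i := by
  rw [card_eq_sum_card_fiberwise (f := fun z => T.dist r z - ℓ) (t := range h) fun z hz => by
    have := hband z (List.mem_toFinset.mp hz)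
    simp only [coe_range, Set.mem_Iio]
    omega]
  refine sum_le_sum fun j _ => le_trans (card_le_card fun z hz => ?_)
    (W.card_filter_dist_add_le hT r hcount (fun z hz => (hband z hz).1) j)
  simp only [mem_filter, List.mem_toFinset] at hz ⊢
  have := hband z hz.1
  exact ⟨hz.1, by omega⟩

lemma Walk.IsPath.card_support_toFinset_lt (hT : T.IsTree) (r : X) {x y : X} {W : T.Walk x y}
    (hW : W.IsPath) {ℓ h : ℕ} (hband : ∀ z ∈ W.support, ℓ ≤ T.dist r z ∧ T.dist r z < ℓ + h) :
    #W.support.toFinset < 2 * h := by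
  obtain ⟨z, hz, hmin⟩ := W.support.toFinset.exists_min_image (T.dist r)
    ⟨x, List.mem_toFinset.mpr W.start_mem_support⟩
  rw [List.mem_toFinset] at hz
  have hmin' : ∀ z' ∈ W.support, T.dist r z ≤ T.dist r z' := fun z' hz' =>
    hmin z' (List.mem_toFinset.mpr hz')
  have hx : T.IsAncestor r z x := W.isAncestor_of_forall_dist_le hT r hz hmin'
  have hy : T.IsAncestor r z y := W.reverse.isAncestor_of_forall_dist_le hT r
    (by simpa using hz) (by simpa using hmin')
  have hcard : #W.support.toFinset = T.dist x y + 1 := by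
    rw [List.toFinset_card_of_nodup hW.support_nodup, Walk.length_support,
      hT.length_eq_dist_of_isPath hW]
  have htri : T.dist x y ≤ T.dist z x + T.dist z y :=
    dist_comm (u := z) ▸ hT.connected.dist_triangle
  have := hband x W.start_mem_support
  have := hband y W.end_mem_support
  have := hband z hz
  unfold IsAncestor at hx hy
  omega

end SimpleGraph

namespace TreeDecomp

variable {V : Type} {G : SimpleGraph V} (D : TreeDecomp V G)

def IsDomino : Prop :=
  ∀ x y : D.X, (D.B x ∩ D.B y).Nonempty → x = y ∨ D.T.Adj x y

lemma exists_dist_eq (r : D.X) (v : V) : ∃ n, ∃ x, v ∈ D.B x ∧ D.T.dist r x = n :=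
  (D.cover v).elim fun x hx => ⟨_, x, hx, rfl⟩

noncomputable def minDepth (r : D.X) (v : V) : ℕ :=
  Nat.find (D.exists_dist_eq r v)

variable {D}

lemma minDepth_le {r x : D.X} {v : V} (hv : v ∈ D.B x) : D.minDepth r v ≤ D.T.dist r x :=
  Nat.find_min' _ ⟨x, hv, rfl⟩

lemma dist_le_minDepth_add_one (hdom : D.IsDomino) {r x : D.X} {v : V} (hv : v ∈ D.B x) :
    D.T.dist r x ≤ D.minDepth r v + 1 := by
  obtain ⟨x₀, hv₀, hx₀⟩ := Nat.find_spec (D.exists_dist_eq r v)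
  rw [minDepth, ← hx₀]
  rcases hdom x₀ x ⟨v, mem_inter.mpr ⟨hv₀, hv⟩⟩ with rfl | hadj
  · omega
  · have := D.tree.dist_eq_dist_add_one_of_adj r hadj
    omega

lemma minDepth_le_minDepth_add_one (hdom : D.IsDomino) (r : D.X) {u v : V} (huv : G.Adj u v) :
    D.minDepth r u ≤ D.minDepth r v + 1 := by
  obtain ⟨x, hux, hvx⟩ := D.edges u v huv
  exact (minDepth_le hux).trans (dist_le_minDepth_add_one hdom hvx)

lemma exists_walk_of_isPath (hdom : D.IsDomino) {k : ℕ} (hwidth : ∀ x : D.X, #(D.B x) ≤ k + 1)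
    (r : D.X) {u v : V} {p : G.Walk u v} (hp : p.IsPath) (hnil : ¬ p.Nil) {m t : ℕ}
    (hwin : ∀ w ∈ p.support, m ≤ D.minDepth r w ∧ D.minDepth r w + 2 ≤ m + t) :
    ∃ (x y : D.X) (Q : D.T.Walk x y), (∀ z, Q.support.count z ≤ (k + 1) / 2) ∧
      (∀ z ∈ Q.support, m ≤ D.T.dist r z ∧ D.T.dist r z < m + t) ∧
      p.length + 1 ≤ (k + 1) * #Q.support.toFinset := by
  obtain ⟨x, y, Q, hQ⟩ := hp.exists_isBagWalk D.edges hdom hnil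
  refine ⟨x, y, Q, fun z => ?_, fun z hz => ?_, ?_⟩
  · have := (hQ.two_mul_count_le_card z).trans
      ((card_le_card (filter_subset _ _)).trans (hwidth z))
    omega
  · have hpos : 0 < #{w ∈ D.B z | w ∈ p.support} :=
      (Nat.mul_pos two_pos (List.count_pos_iff.mpr hz)).trans_le (hQ.two_mul_count_le_card z)
    obtain ⟨w, hw⟩ := card_pos.mp hpos
    rw [mem_filter] at hw
    have := minDepth_le (r := r) hw.1
    have := dist_le_minDepth_add_one (r := r) hdom hw.1
    have := hwin w hw.2
    omega
  calc p.length + 1 = #p.support.toFinset := by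
        rw [List.toFinset_card_of_nodup hp.support_nodup, SimpleGraph.Walk.length_support]
    _ ≤ #(Q.support.toFinset.biUnion D.B) := card_le_card fun w hw => by
        obtain ⟨z, hz, hwz⟩ := hQ.cover w (List.mem_toFinset.mp hw)
        exact mem_biUnion.mpr ⟨z, List.mem_toFinset.mpr hz, hwz⟩
    _ ≤ #Q.support.toFinset * (k + 1) := card_biUnion_le_card_mul _ _ _ fun z _ => hwidth z
    _ = (k + 1) * #Q.support.toFinset := mul_comm _ _

lemma length_add_one_le (hdom : D.IsDomino) {k : ℕ} (hwidth : ∀ x : D.X, #(D.B x) ≤ k + 1)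
    (r : D.X) {i t : ℕ} (hi : i < t) {M : ℕ} (hM : 1 ≤ M)
    (hQ : ∀ (x y : D.X) (Q : D.T.Walk x y) (ℓ : ℕ), (∀ z, Q.support.count z ≤ (k + 1) / 2) →
      (∀ z ∈ Q.support, ℓ ≤ D.T.dist r z ∧ D.T.dist r z < ℓ + t) → #Q.support.toFinset ≤ M)
    {u v : V} {p : G.Walk u v} (hp : p.IsPath)
    (havoid : ∀ w ∈ p.support, D.minDepth r w % t ≠ i) :
    p.length + 1 ≤ (k + 1) * M := by
  by_cases hnil : p.Nil
  · rw [hnil.length_eq_zero]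
    exact Nat.mul_le_mul (Nat.le_add_left 1 k) hM
  obtain ⟨m, hm⟩ :=
    p.exists_window_of_forall_mod_ne (fun _ _ => minDepth_le_minDepth_add_one hdom r) hi havoid
  obtain ⟨x, y, Q, hcount, hband, hlen⟩ := exists_walk_of_isPath hdom hwidth r hp hnil hm
  exact hlen.trans (Nat.mul_le_mul_left _ (hQ x y Q m hcount hband))

end TreeDecomp

open SimpleGraph

theorem trimming_of_bounded_domino_treewidth_general {V : Type} [Fintype V]
    (G : SimpleGraph V) (w : V → ℝ)
    (k t : ℕ) (ht : 2 ≤ t)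
    (D : TreeDecomp V G)
    (hwidth : ∀ x : D.X, (D.B x).card ≤ k + 1)
    (hdomino : ∀ x y : D.X, ((D.B x) ∩ (D.B y)).Nonempty → x = y ∨ D.T.Adj x y)
    (a : ℕ) (ha : a = (k + 1) / 2) :
    (a ≤ 1 → ∃ U : Finset V,
      IsTrimming G w t (((4 * t - 3) * (k + 1) : ℕ) : ℝ) U) ∧
    (2 ≤ a → ∃ U : Finset V,
      IsTrimming G w t
        (((k : ℝ) + 1) * ((a : ℝ) ^ (2 * t - 2) * ((a : ℝ) + 1) - 2) /
          ((a : ℝ) - 1)) U) := by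
  obtain ⟨r⟩ := D.tree.connected.nonempty
  obtain ⟨i, hi, hU⟩ := exists_mod_eq_sum_le w (D.minDepth r) (by omega : 0 < t)
  refine ⟨fun ha1 => ⟨_, hU, fun u v p hp hlong => ?_⟩,
    fun ha2 => ⟨_, hU, fun u v p hp hlong => ?_⟩⟩ <;> by_contra! havoid
  · have hlen := TreeDecomp.length_add_one_le hdomino hwidth r hi (M := 2 * t - 1) (by omega)
      (fun x y Q ℓ hcount hband => Nat.le_sub_one_of_lt <|
        (Walk.isPath_def _ |>.mpr <| List.nodup_iff_count_le_one.mpr fun z =>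
          (hcount z).trans (ha ▸ ha1)).card_support_toFinset_lt D.tree r hband)
      hp (by simpa using havoid)
    have hlong' : (k + 1) * (4 * t - 3) < p.length := by rw [mul_comm]; exact_mod_cast hlong
    have := Nat.mul_le_mul_left (k + 1) (by omega : 2 * t - 1 ≤ 4 * t - 3)
    omega
  · set N := ∑ j ∈ range t, ∑ i ∈ range (j + 1), a ^ i
    have hN : 1 ≤ N := by
      simpa using single_le_sum (f := fun j => ∑ i ∈ range (j + 1), a ^ i)
        (fun _ _ => Nat.zero_le _) (mem_range.mpr (by omega : 0 < t))
    have hlen := TreeDecomp.length_add_one_le hdomino hwidth r hi hN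
      (fun x y Q ℓ hcount hband => Q.card_support_toFinset_le D.tree r (ha ▸ hcount) hband)
      hp (by simpa using havoid)
    have hlen' : (p.length : ℝ) + 1 ≤ ((k : ℝ) + 1) * N := by exact_mod_cast hlen
    have hg : ((k : ℝ) + 1) * N ≤
        ((k : ℝ) + 1) * ((a : ℝ) ^ (2 * t - 2) * ((a : ℝ) + 1) - 2) / ((a : ℝ) - 1) := by
      rw [mul_div_assoc]
      exact mul_le_mul_of_nonneg_left (sum_range_geom_sum_le ha2 ht) (by positivity)
    linarith

/-- If a vertex-weighted graph has a domino tree decomposition (elongation at most 1)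
of width at most `k` and `t ≥ 2`, then with `a = ⌈k/2⌉` it has a
`(t, (4t-3)(k+1))`-trimming if `a ≤ 1`, and a
`(t, (k+1)(a^{2t-2}(a+1) - 2)/(a-1))`-trimming if `a ≥ 2`. -/
theorem trimming_of_bounded_domino_treewidth {V : Type} [Fintype V]
    (G : SimpleGraph V) (w : V → ℝ) (hw : ∀ v, 0 ≤ w v)
    (k t : ℕ) (ht : 2 ≤ t)
    (D : TreeDecomp V G)
    (hwidth : ∀ x : D.X, (D.B x).card ≤ k + 1)
    (hdomino : ∀ x y : D.X, ((D.B x) ∩ (D.B y)).Nonempty → x = y ∨ D.T.Adj x y)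
    (a : ℕ) (ha : a = (k + 1) / 2) :
    (a ≤ 1 → ∃ U : Finset V,
      IsTrimming G w t (((4 * t - 3) * (k + 1) : ℕ) : ℝ) U) ∧
    (2 ≤ a → ∃ U : Finset V,
      IsTrimming G w t
        (((k : ℝ) + 1) * ((a : ℝ) ^ (2 * t - 2) * ((a : ℝ) + 1) - 2) /
          ((a : ℝ) - 1)) U) :=
  trimming_of_bounded_domino_treewidth_general G w k t ht D hwidth hdomino a ha
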